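/- Let C be a nonempty closed convex subset of a real Hilbert space, let T_1,…,T_m : C → C be nonexpansive mappings with nonempty common fixed point set, and let μ_1,…,μ_m > 0 with ∑ μ_i = 1. Define T(x) := ∑ μ_i T_i(x). Then the fixed point set of T equals the intersection of the fixed point sets of the T_i. -/

import Mathlib

/-!
If `x = ∑ μᵢ Tᵢ x` and `z` is a common fixed point, then the vectors `Tᵢ x - z` all lie in the
closed ball of radius `‖x - z‖` and their convex combination `x - z` lies on its boundary. A Hilbert
space is strictly convex, so a convex combination with positive weights of points of a closed ball
reaches its sphere only if all the points coincide; hence `Tᵢ x - z = x - z` for every `i`.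
-/

open Finset

section StrictConvexSpace

variable {ι V : Type*} [Fintype ι] [NormedAddCommGroup V] [NormedSpace ℝ V]
  [StrictConvexSpace ℝ V] {w : ι → ℝ}

theorem eq_sum_smul_of_norm_le_norm_sum_smul {v : ι → V} (hw : ∀ i, 0 < w i)
    (hw₁ : ∑ i, w i = 1) (hv : ∀ i, ‖v i‖ ≤ ‖∑ k, w k • v k‖) (i : ι) :
    v i = ∑ k, w k • v k := by
  have hconst : ∀ j, v j = v i := by
    by_contra! ⟨j, hj⟩
    exact (norm_sum_lt_of_strictConvexSpace (fun k _ ↦ (hw k).le) hw₁ (mem_univ j)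
      (mem_univ i) hj (hw j).ne' (hw i).ne' fun k _ ↦ hv k).false
  simp_rw [hconst, ← sum_smul, hw₁, one_smul]

theorem apply_eq_self_of_sum_smul_apply_eq_self {T : ι → V → V} {x z : V} (hw : ∀ i, 0 < w i)
    (hw₁ : ∑ i, w i = 1) (hT : ∀ i, ‖T i x - z‖ ≤ ‖x - z‖)
    (hx : ∑ i, w i • T i x = x) (i : ι) : T i x = x := by
  have hsum : ∑ k, w k • (T k x - z) = x - z := by
    simp_rw [smul_sub, sum_sub_distrib, ← sum_smul, hw₁, one_smul, hx]
  have := eq_sum_smul_of_norm_le_norm_sum_smul hw hw₁ (v := fun k ↦ T k x - z)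
    (by simpa only [hsum] using hT) i
  rwa [hsum, sub_left_inj] at this

end StrictConvexSpace

theorem sum_smul_apply_eq_self {ι M : Type*} [Fintype ι] [AddCommMonoid M] [Module ℝ M]
    {w : ι → ℝ} (hw₁ : ∑ i, w i = 1) {T : ι → M → M} {x : M} (hx : ∀ i, T i x = x) :
    ∑ i, w i • T i x = x := by
  simp_rw [hx, ← sum_smul, hw₁, one_smul]

theorem stmt_3_general {H : Type*} [NormedAddCommGroup H] [InnerProductSpace ℝ H]
    (C : Set H)
    (m : ℕ) (T : Fin m → H → H)
    (hne : ∀ i, ∀ x ∈ C, ∀ y ∈ C, ‖T i x - T i y‖ ≤ ‖x - y‖)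
    (hcommon : ∃ x ∈ C, ∀ i, T i x = x)
    (μ : Fin m → ℝ) (hμpos : ∀ i, 0 < μ i) (hμsum : ∑ i, μ i = 1) :
    {x ∈ C | (∑ i, μ i • T i x) = x} = ⋂ i, {x ∈ C | T i x = x} := by
  obtain ⟨z, hzC, hz⟩ := hcommon
  obtain ⟨i₀⟩ : Nonempty (Fin m) := by
    by_contra h
    simp [not_nonempty_iff.mp h] at hμsum
  ext x
  simp only [Set.mem_ofPred_eq, Set.mem_iInter]
  constructor
  · rintro ⟨hxC, hx⟩ i
    have hquasi : ∀ j, ‖T j x - z‖ ≤ ‖x - z‖ := fun j ↦ by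
      simpa only [hz j] using hne j x hxC z hzC
    exact ⟨hxC, apply_eq_self_of_sum_smul_apply_eq_self hμpos hμsum hquasi hx i⟩
  · intro h
    exact ⟨(h i₀).1, sum_smul_apply_eq_self hμsum fun i ↦ (h i).2⟩

theorem stmt_3 {H : Type*} [NormedAddCommGroup H] [InnerProductSpace ℝ H]
    [CompleteSpace H]
    (C : Set H) (hCne : C.Nonempty) (hCclosed : IsClosed C) (hCconv : Convex ℝ C)
    (m : ℕ) (T : Fin m → H → H)
    (hmap : ∀ i, ∀ x ∈ C, T i x ∈ C)
    (hne : ∀ i, ∀ x ∈ C, ∀ y ∈ C, ‖T i x - T i y‖ ≤ ‖x - y‖)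
    (hcommon : ∃ x ∈ C, ∀ i, T i x = x)
    (μ : Fin m → ℝ) (hμpos : ∀ i, 0 < μ i) (hμsum : ∑ i, μ i = 1) :
    {x ∈ C | (∑ i, μ i • T i x) = x} = ⋂ i, {x ∈ C | T i x = x} :=
  stmt_3_general C m T hne hcommon μ hμpos hμsum
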